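/- Let τ : ℝⁿ → (0,∞) be smooth and suppose that for some C² function q on (0,∞) with q' nonvanishing, constants c₁,…,cₙ not all zero, and for every function of the form p̃(w) = 1/(1-w) + a (a > 0) there exists a function H (depending on p̃) such that q'(x)·((τ(y)-x)²/τ(y))·p̃(x/τ(y)) = H(c·y + q(x)) for all x in an interval of (0,∞) and all y ∈ ℝⁿ. Then q(x) = α ln x + β and (∂τ/∂yᵢ)² = τ·∂²τ/∂yᵢ² for each i. -/

import Mathlib

open Set Finset

/-- Partial derivative of `f : (Fin n → ℝ) → ℝ` in the `i`-th coordinate. -/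
noncomputable def pd {n : ℕ} (i : Fin n) (f : (Fin n → ℝ) → ℝ) (y : Fin n → ℝ) : ℝ :=
  deriv (fun t => f (Function.update y i t)) (y i)

set_option maxHeartbeats 1000000 in
/-- If the functional equation
`q'(x)·((τ(y)-x)²/τ(y))·p̃ₐ(x/τ(y)) = H(c·y + q(x))` holds (for every member of the family
`p̃ₐ(w) = 1/(1-w) + a`, `a > 0`, with some `H = Hₐ`) for all `x` in an interval and all
`y ∈ ℝⁿ`, then `q'(x) = -x·q''(x)`, hence `q(x) = α ln x + β`, and
`(∂τ/∂yᵢ)² = τ·∂²τ/∂yᵢ²` for each `i`. -/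
theorem functional_equation_forces_log_and_pde {n : ℕ}
    (τ : (Fin n → ℝ) → ℝ) (hτ : ContDiff ℝ (⊤ : ℕ∞) τ) (hτpos : ∀ y, 0 < τ y)
    (q : ℝ → ℝ)
    (hq : ∀ x ∈ Set.Ioi (0:ℝ), DifferentiableAt ℝ q x)
    (hq' : ∀ x ∈ Set.Ioi (0:ℝ), DifferentiableAt ℝ (deriv q) x)
    (hq'0 : ∀ x ∈ Set.Ioi (0:ℝ), deriv q x ≠ 0)
    (c : Fin n → ℝ) (hc : c ≠ 0)
    (x₀ x₁ : ℝ) (hx₀ : 0 < x₀) (hx : x₀ < x₁)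
    (hFE : ∀ a : ℝ, 0 < a → ∃ H : ℝ → ℝ,
      ∀ x ∈ Set.Ioo x₀ x₁, ∀ y : Fin n → ℝ,
        deriv q x * ((τ y - x) ^ 2 / τ y) * (1 / (1 - x / τ y) + a) =
          H ((∑ i, c i * y i) + q x)) :
    (∀ x ∈ Set.Ioo x₀ x₁, deriv q x = -x * deriv (deriv q) x) ∧
    (∃ α β : ℝ, ∀ x ∈ Set.Ioo x₀ x₁, q x = α * Real.log x + β) ∧
    (∀ (y : Fin n → ℝ) (i : Fin n), (pd i τ y) ^ 2 = τ y * pd i (pd i τ) y) := by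
  classical
  set qd := deriv q with hqd_def
  set qdd := deriv (deriv q) with hqdd_def
  have hsub : Set.Ioo x₀ x₁ ⊆ Set.Ioi (0:ℝ) := fun x hx' => lt_trans hx₀ hx'.1
  obtain ⟨i₀, hi₀⟩ : ∃ i, c i ≠ 0 := Function.ne_iff.mp hc
  obtain ⟨H₁, hH₁⟩ := hFE 1 one_pos
  obtain ⟨H₂, hH₂⟩ := hFE 2 two_pos
  set F : ℝ → ℝ := fun s => 2 * H₁ s - H₂ s with hF_def
  set G : ℝ → ℝ := fun s => H₂ s - H₁ s with hG_def
  have keyE : ∀ (x : ℝ) (y : Fin n → ℝ),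
      ((τ y - x) ^ 2 / τ y) * (1 / (1 - x / τ y)) = τ y - x := by
    intro x y
    have hT := hτpos y
    rcases eq_or_ne (τ y) x with h | h
    · rw [h]; simp
    · have h1 : 1 - x / τ y = (τ y - x) / τ y := by field_simp
      rw [h1]
      have h2 : τ y - x ≠ 0 := sub_ne_zero.mpr h
      field_simp
  -- Equation (I)
  have hI : ∀ x ∈ Set.Ioo x₀ x₁, ∀ y : Fin n → ℝ,
      qd x * (τ y - x) = F ((∑ i, c i * y i) + q x) := by
    intro x hxm y
    have h1 := hH₁ x hxm y
    have h2 := hH₂ x hxm y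
    have h3 : qd x * (τ y - x) = 2 * (qd x * ((τ y - x) ^ 2 / τ y) * (1 / (1 - x / τ y) + 1))
        - qd x * ((τ y - x) ^ 2 / τ y) * (1 / (1 - x / τ y) + 2) := by
      linear_combination (-(qd x)) * keyE x y
    rw [h3, h1, h2]
  -- Equation (II)
  have hII : ∀ x ∈ Set.Ioo x₀ x₁, ∀ y : Fin n → ℝ,
      qd x * ((τ y - x) ^ 2 / τ y) = G ((∑ i, c i * y i) + q x) := by
    intro x hxm y
    have h1 := hH₁ x hxm y
    have h2 := hH₂ x hxm y
    have h3 : qd x * ((τ y - x) ^ 2 / τ y)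
        = qd x * ((τ y - x) ^ 2 / τ y) * (1 / (1 - x / τ y) + 2)
          - qd x * ((τ y - x) ^ 2 / τ y) * (1 / (1 - x / τ y) + 1) := by ring
    rw [h3, h1, h2]
  -- midpoint
  set xm : ℝ := (x₀ + x₁) / 2 with hxm_def
  have hxmI : xm ∈ Set.Ioo x₀ x₁ := ⟨by rw [hxm_def]; linarith, by rw [hxm_def]; linarith⟩
  -- differentiability of F and G
  have hsingle_sum : ∀ t : ℝ, (∑ j, c j * (Pi.single i₀ t : Fin n → ℝ) j) = c i₀ * t := by
    intro t
    rw [Finset.sum_eq_single i₀]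
    · simp
    · intro j _ h; simp [Pi.single_apply, h]
    · simp
  have hsingle_diff : Differentiable ℝ (fun s : ℝ => (Pi.single i₀ ((s - q xm) / c i₀) : Fin n → ℝ)) := by
    have h : (fun s : ℝ => (Pi.single i₀ ((s - q xm) / c i₀) : Fin n → ℝ))
        = fun s : ℝ => ((s - q xm) / c i₀) • (Pi.single i₀ 1 : Fin n → ℝ) := by
      funext s j
      rcases eq_or_ne j i₀ with h | h
      · subst h; simp
      · simp [Pi.single_apply, h]
    rw [h]
    exact ((differentiable_id.sub_const _).div_const _).smul_const _
  have hτd : Differentiable ℝ τ := hτ.differentiable (by simp)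
  have hFdiff : Differentiable ℝ F := by
    have hFeq : F = fun s => qd xm * (τ (Pi.single i₀ ((s - q xm) / c i₀)) - xm) := by
      funext s
      have h := hI xm hxmI (Pi.single i₀ ((s - q xm) / c i₀))
      rw [hsingle_sum] at h
      have h2 : c i₀ * ((s - q xm) / c i₀) + q xm = s := by field_simp; ring
      rw [h2] at h
      exact h.symm
    rw [hFeq]
    exact (differentiable_const _).mul ((hτd.comp hsingle_diff).sub_const _)
  have hGdiff : Differentiable ℝ G := by
    have hGeq : G = fun s => qd xm * ((τ (Pi.single i₀ ((s - q xm) / c i₀)) - xm) ^ 2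
        / τ (Pi.single i₀ ((s - q xm) / c i₀))) := by
      funext s
      have h := hII xm hxmI (Pi.single i₀ ((s - q xm) / c i₀))
      rw [hsingle_sum] at h
      have h2 : c i₀ * ((s - q xm) / c i₀) + q xm = s := by field_simp; ring
      rw [h2] at h
      exact h.symm
    rw [hGeq]
    refine (differentiable_const _).mul (Differentiable.div ?_ (hτd.comp hsingle_diff) ?_)
    · exact ((hτd.comp hsingle_diff).sub_const _).pow 2
    · intro s; exact ne_of_gt (hτpos _)
  -- the coordinate curve
  have hupd_eq : ∀ (y : Fin n → ℝ) (i : Fin n) (t : ℝ),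
      Function.update y i t = y + (t - y i) • (Pi.single i 1 : Fin n → ℝ) := by
    intro y i t
    funext j
    rcases eq_or_ne j i with h | h
    · subst h; simp
    · simp [Function.update_of_ne h, Pi.single_apply, h]
  have hφdiff : ∀ (y : Fin n → ℝ) (i : Fin n) (t : ℝ),
      DifferentiableAt ℝ (fun t : ℝ => τ (Function.update y i t)) t := by
    intro y i t
    simp only [hupd_eq y i]
    have hg : Differentiable ℝ (fun t : ℝ => y + (t - y i) • (Pi.single i 1 : Fin n → ℝ)) :=
      (differentiable_const y).add ((differentiable_id.sub_const _).smul_const _)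
    exact ((hτd.comp hg) t)
  have hφ : ∀ (y : Fin n → ℝ) (i : Fin n),
      HasDerivAt (fun t : ℝ => τ (Function.update y i t)) (pd i τ y) (y i) := by
    intro y i
    have h := (hφdiff y i (y i)).hasDerivAt
    simpa [pd] using h
  have hsum_upd : ∀ (y : Fin n → ℝ) (i : Fin n) (t : ℝ),
      ∑ j, c j * Function.update y i t j = c i * t + ∑ j ∈ Finset.univ \ {i}, c j * y j := by
    intro y i t
    have h : (fun j => c j * Function.update y i t j)
        = Function.update (fun j => c j * y j) i (c i * t) := by
      funext j
      rcases eq_or_ne j i with h | h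
      · subst h; simp
      · simp [Function.update_of_ne h]
    rw [h, Finset.sum_update_of_mem (Finset.mem_univ i)]
  -- The main pointwise identities
  have main : ∀ x ∈ Set.Ioo x₀ x₁, ∀ (y : Fin n → ℝ) (i : Fin n),
      c i * (qdd x * (τ y - x) - qd x) = qd x ^ 2 * pd i τ y ∧
      (τ y ≠ x → x * qd x * pd i τ y = -(c i * τ y)) := by
    intro x hxI y i
    have hx0 : x ∈ Set.Ioi (0:ℝ) := hsub hxI
    have hqx : HasDerivAt q (qd x) x := (hq x hx0).hasDerivAt
    have hqdx : HasDerivAt qd (qdd x) x := (hq' x hx0).hasDerivAt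
    have hA0 : qd x ≠ 0 := hq'0 x hx0
    have hT : 0 < τ y := hτpos y
    have hT0 : τ y ≠ 0 := ne_of_gt hT
    set s : ℝ := (∑ i, c i * y i) + q x with hs_def
    -- E1
    have hE1 : deriv F s * qd x = qdd x * (τ y - x) - qd x := by
      have h1 : HasDerivAt (fun x' => F ((∑ i, c i * y i) + q x')) (deriv F s * qd x) x := by
        have hg : HasDerivAt (fun x' => (∑ i, c i * y i) + q x') (qd x) x := by
          simpa using (hqx.const_add (∑ i, c i * y i))
        exact (hFdiff.differentiableAt.hasDerivAt).comp x hg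
      have heq : (fun x' => qd x' * (τ y - x')) =ᶠ[nhds x]
          (fun x' => F ((∑ i, c i * y i) + q x')) := by
        filter_upwards [isOpen_Ioo.mem_nhds hxI] with x' hx'
        exact hI x' hx' y
      have h1' : HasDerivAt (fun x' => qd x' * (τ y - x')) (deriv F s * qd x) x :=
        h1.congr_of_eventuallyEq heq
      have h2 : HasDerivAt (fun x' => qd x' * (τ y - x')) (qdd x * (τ y - x) + qd x * (0 - 1)) x :=
        hqdx.mul ((hasDerivAt_const x (τ y)).sub (hasDerivAt_id x))
      linear_combination h1'.unique h2
    -- E2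
    have hE2 : deriv F s * c i = qd x * pd i τ y := by
      set S : ℝ := (∑ j ∈ Finset.univ \ {i}, c j * y j) + q x with hS_def
      have hsS : s = c i * y i + S := by
        rw [hs_def, hS_def]
        have h := hsum_upd y i (y i)
        simp only [Function.update_eq_self] at h
        rw [h]; ring
      have h1 : HasDerivAt (fun t => F (c i * t + S)) (deriv F s * (c i * 1)) (y i) := by
        have hg : HasDerivAt (fun t : ℝ => c i * t + S) (c i * 1) (y i) :=
          ((hasDerivAt_id (y i)).const_mul (c i)).add_const S
        have hF' : HasDerivAt F (deriv F s) (c i * y i + S) := by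
          rw [← hsS]; exact hFdiff.differentiableAt.hasDerivAt
        exact hF'.comp (y i) hg
      have heq : (fun t => qd x * (τ (Function.update y i t) - x))
          = fun t => F (c i * t + S) := by
        funext t
        have h := hI x hxI (Function.update y i t)
        rw [hsum_upd y i t] at h
        rw [h]; congr 1; rw [hS_def]; ring
      have h1' : HasDerivAt (fun t => qd x * (τ (Function.update y i t) - x))
          (deriv F s * (c i * 1)) (y i) := by rw [heq]; exact h1
      have h2 : HasDerivAt (fun t => qd x * (τ (Function.update y i t) - x))
          (qd x * pd i τ y) (y i) := by
        simpa using (((hφ y i).sub_const x).const_mul (qd x))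
      linear_combination h1'.unique h2
    -- E3 (already multiplied by τ y)
    have hE3 : deriv G s * qd x * τ y = qdd x * (τ y - x) ^ 2 - 2 * qd x * (τ y - x) := by
      have h1 : HasDerivAt (fun x' => G ((∑ i, c i * y i) + q x')) (deriv G s * qd x) x := by
        have hg : HasDerivAt (fun x' => (∑ i, c i * y i) + q x') (qd x) x := by
          simpa using (hqx.const_add (∑ i, c i * y i))
        exact (hGdiff.differentiableAt.hasDerivAt).comp x hg
      have heq : (fun x' => qd x' * ((τ y - x') ^ 2 / τ y)) =ᶠ[nhds x]
          (fun x' => G ((∑ i, c i * y i) + q x')) := by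
        filter_upwards [isOpen_Ioo.mem_nhds hxI] with x' hx'
        exact hII x' hx' y
      have h1' : HasDerivAt (fun x' => qd x' * ((τ y - x') ^ 2 / τ y)) (deriv G s * qd x) x :=
        h1.congr_of_eventuallyEq heq
      have hin : HasDerivAt (fun x' : ℝ => (τ y - x') ^ 2) (2 * (τ y - x) ^ 1 * (0 - 1)) x :=
        ((hasDerivAt_const x (τ y)).sub (hasDerivAt_id x)).pow 2
      have h2 : HasDerivAt (fun x' => qd x' * ((τ y - x') ^ 2 / τ y))
          ((qdd x * (τ y - x) ^ 2 + qd x * (2 * (τ y - x) ^ 1 * (0 - 1))) / τ y) x := by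
        have h3 := (hqdx.mul hin).div_const (τ y)
        have hfe : (fun x' => qd x' * ((τ y - x') ^ 2 / τ y))
            = fun x' => qd x' * (τ y - x') ^ 2 / τ y := by funext x'; ring
        rw [hfe]
        exact h3
      have h4 := h1'.unique h2
      have h5 : deriv G s * qd x * τ y
          = (qdd x * (τ y - x) ^ 2 + qd x * (2 * (τ y - x) ^ 1 * (0 - 1))) / τ y * τ y := by
        rw [h4]
      rw [div_mul_cancel₀ _ hT0] at h5
      linear_combination h5
    -- E4 (already multiplied by τ y ^ 2)
    have hE4 : deriv G s * c i * τ y ^ 2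
        = qd x * pd i τ y * (τ y - x) * (τ y + x) := by
      set S : ℝ := (∑ j ∈ Finset.univ \ {i}, c j * y j) + q x with hS_def
      have hsS : s = c i * y i + S := by
        rw [hs_def, hS_def]
        have h := hsum_upd y i (y i)
        simp only [Function.update_eq_self] at h
        rw [h]; ring
      have h1 : HasDerivAt (fun t => G (c i * t + S)) (deriv G s * (c i * 1)) (y i) := by
        have hg : HasDerivAt (fun t : ℝ => c i * t + S) (c i * 1) (y i) :=
          ((hasDerivAt_id (y i)).const_mul (c i)).add_const S
        have hG' : HasDerivAt G (deriv G s) (c i * y i + S) := by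
          rw [← hsS]; exact hGdiff.differentiableAt.hasDerivAt
        exact hG'.comp (y i) hg
      have heq : (fun t => qd x * ((τ (Function.update y i t) - x) ^ 2 / τ (Function.update y i t)))
          = fun t => G (c i * t + S) := by
        funext t
        have h := hII x hxI (Function.update y i t)
        rw [hsum_upd y i t] at h
        rw [h]; congr 1; rw [hS_def]; ring
      have h1' : HasDerivAt (fun t => qd x * ((τ (Function.update y i t) - x) ^ 2
          / τ (Function.update y i t))) (deriv G s * (c i * 1)) (y i) := by
        rw [heq]; exact h1
      have hnum : HasDerivAt (fun t => qd x * (τ (Function.update y i t) - x) ^ 2)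
          (qd x * (2 * (τ y - x) ^ 1 * pd i τ y)) (y i) := by
        have h := (((hφ y i).sub_const x).pow 2).const_mul (qd x)
        simpa using h
      have hden0 : τ (Function.update y i (y i)) ≠ 0 := by
        rw [Function.update_eq_self]; exact hT0
      have h2 : HasDerivAt (fun t => qd x * (τ (Function.update y i t) - x) ^ 2
          / τ (Function.update y i t))
          ((qd x * (2 * (τ y - x) ^ 1 * pd i τ y) * τ (Function.update y i (y i))
            - qd x * (τ (Function.update y i (y i)) - x) ^ 2 * pd i τ y)
            / τ (Function.update y i (y i)) ^ 2) (y i) :=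
        hnum.div (hφ y i) hden0
      rw [Function.update_eq_self] at h2
      have h2' : HasDerivAt (fun t => qd x * ((τ (Function.update y i t) - x) ^ 2
          / τ (Function.update y i t)))
          ((qd x * (2 * (τ y - x) ^ 1 * pd i τ y) * τ y
            - qd x * (τ y - x) ^ 2 * pd i τ y) / τ y ^ 2) (y i) := by
        convert h2 using 1
        funext t; ring
      have h4 := h1'.unique h2'
      have h5 : deriv G s * (c i * 1) * τ y ^ 2
          = (qd x * (2 * (τ y - x) ^ 1 * pd i τ y) * τ y
            - qd x * (τ y - x) ^ 2 * pd i τ y) / τ y ^ 2 * τ y ^ 2 := by rw [h4]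
      rw [div_mul_cancel₀ _ (pow_ne_zero 2 hT0)] at h5
      linear_combination h5
    -- combine into key identities
    have hK1 : c i * (qdd x * (τ y - x) - qd x) = qd x ^ 2 * pd i τ y := by
      have h : c i * (deriv F s * qd x) = qd x * (deriv F s * c i) := by ring
      rw [hE1, hE2] at h
      linear_combination h
    refine ⟨hK1, fun hTx => ?_⟩
    have hK2' : c i * τ y * (qdd x * (τ y - x) ^ 2 - 2 * qd x * (τ y - x))
        = qd x ^ 2 * pd i τ y * (τ y - x) * (τ y + x) := by
      have h : c i * (deriv G s * qd x * τ y) * τ y = qd x * (deriv G s * c i * τ y ^ 2) := by ring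
      rw [hE3, hE4] at h
      linear_combination h
    have htx0 : τ y - x ≠ 0 := sub_ne_zero.mpr (fun hh => hTx hh)
    have h5 : (τ y - x) * (qd x * (τ y * c i + qd x * pd i τ y * x)) = 0 := by
      linear_combination τ y * (τ y - x) * hK1 - hK2'
    have h6 : qd x * (τ y * c i + qd x * pd i τ y * x) = 0 := by
      rcases mul_eq_zero.mp h5 with h | h
      · exact absurd h htx0
      · exact h
    have h7 : τ y * c i + qd x * pd i τ y * x = 0 := by
      rcases mul_eq_zero.mp h6 with h | h
      · exact absurd h hA0
      · exact h
    linarith [h7]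
  -- two distinct points in the interval
  set xa : ℝ := x₀ + (x₁ - x₀) / 3 with hxa_def
  set xb : ℝ := x₀ + 2 * (x₁ - x₀) / 3 with hxb_def
  have hxaI : xa ∈ Set.Ioo x₀ x₁ := ⟨by rw [hxa_def]; linarith, by rw [hxa_def]; linarith⟩
  have hxbI : xb ∈ Set.Ioo x₀ x₁ := ⟨by rw [hxb_def]; linarith, by rw [hxb_def]; linarith⟩
  have hxab : xa ≠ xb := by rw [hxa_def, hxb_def]; intro h; nlinarith [h]
  have hpick : ∀ y : Fin n → ℝ, ∃ x ∈ Set.Ioo x₀ x₁, τ y ≠ x := by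
    intro y
    rcases eq_or_ne (τ y) xa with h | h
    · refine ⟨xb, hxbI, ?_⟩; rw [h]; exact hxab
    · exact ⟨xa, hxaI, h⟩
  have hT0pos : 0 < τ (0 : Fin n → ℝ) := hτpos 0
  -- P0 ≠ 0
  have hP0ne : pd i₀ τ (0 : Fin n → ℝ) ≠ 0 := by
    obtain ⟨x, hxI, hTx⟩ := hpick 0
    have hst := (main x hxI 0 i₀).2 hTx
    intro hP
    rw [hP, mul_zero] at hst
    have h : c i₀ * τ (0 : Fin n → ℝ) = 0 := by linarith
    rcases mul_eq_zero.mp h with h' | h'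
    · exact hi₀ h'
    · exact (ne_of_gt hT0pos) h'
  set k : ℝ := -(c i₀ * τ (0 : Fin n → ℝ)) / pd i₀ τ (0 : Fin n → ℝ) with hk_def
  have hk : ∀ x ∈ Set.Ioo x₀ x₁, x * qd x = k := by
    intro x hxI
    have hx0 : x ∈ Set.Ioi (0:ℝ) := hsub hxI
    have hA0 : qd x ≠ 0 := hq'0 x hx0
    rw [hk_def, eq_div_iff hP0ne]
    rcases eq_or_ne (τ (0 : Fin n → ℝ)) x with h | h
    · have hK1 := (main x hxI 0 i₀).1
      rw [h] at hK1
      have h2 : qd x * (qd x * pd i₀ τ (0 : Fin n → ℝ) + c i₀) = 0 := by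
        linear_combination (-1 : ℝ) * hK1
      have h7 : qd x * pd i₀ τ (0 : Fin n → ℝ) + c i₀ = 0 := by
        rcases mul_eq_zero.mp h2 with hh | hh
        · exact absurd hh hA0
        · exact hh
      rw [h]
      linear_combination x * h7
    · have hstar := (main x hxI 0 i₀).2 h
      linear_combination hstar
  have hxmpos : 0 < xm := lt_trans hx₀ hxmI.1
  have hk0 : k ≠ 0 := by
    have h := hk xm hxmI
    intro hkz
    rw [hkz] at h
    rcases mul_eq_zero.mp h with h' | h'
    · exact ne_of_gt hxmpos h'
    · exact hq'0 xm (hsub hxmI) h'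
  -- Conclusion 1
  have concl1 : ∀ x ∈ Set.Ioo x₀ x₁, qd x = -x * qdd x := by
    intro x hxI
    have hx0 : x ∈ Set.Ioi (0:ℝ) := hsub hxI
    have hqdx : HasDerivAt qd (qdd x) x := (hq' x hx0).hasDerivAt
    have h1 : HasDerivAt (fun x' => x' * qd x') (1 * qd x + x * qdd x) x :=
      (hasDerivAt_id x).mul hqdx
    have heq : (fun x' => x' * qd x') =ᶠ[nhds x] (fun _ => k) := by
      filter_upwards [isOpen_Ioo.mem_nhds hxI] with x' hx'
      exact hk x' hx'
    have h2 : HasDerivAt (fun _ : ℝ => k) (1 * qd x + x * qdd x) x :=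
      h1.congr_of_eventuallyEq heq.symm
    have h3 : (1 : ℝ) * qd x + x * qdd x = 0 := h2.unique (hasDerivAt_const x k)
    linarith
  refine ⟨concl1, ?_, ?_⟩
  · -- Conclusion 2
    refine ⟨k, q xm - k * Real.log xm, ?_⟩
    intro x hxI
    set w : ℝ → ℝ := fun x => q x - k * Real.log x with hw_def
    have hwd : ∀ x' ∈ Set.Ioo x₀ x₁, HasDerivAt w 0 x' := by
      intro x' hx'
      have hx'0 : (0:ℝ) < x' := hsub hx'
      have h1 : HasDerivAt (fun x => k * Real.log x) (k * (1 / x')) x' := by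
        simpa [one_div] using (Real.hasDerivAt_log (ne_of_gt hx'0)).const_mul k
      have h2 : HasDerivAt w (qd x' - k * (1 / x')) x' :=
        ((hq x' hx'0).hasDerivAt).sub h1
      have h3 : qd x' - k * (1 / x') = 0 := by
        have h4 := hk x' hx'
        have h5 : x' ≠ 0 := ne_of_gt hx'0
        field_simp
        linear_combination h4
      rwa [h3] at h2
    have hconst : w x = w xm := by
      have hconv : Convex ℝ (Set.Ioo x₀ x₁) := convex_Ioo x₀ x₁
      refine hconv.is_const_of_fderivWithin_eq_zero (𝕜 := ℝ) ?_ ?_ hxI hxmI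
      · intro x' hx'
        exact ((hwd x' hx').differentiableAt).differentiableWithinAt
      · intro x' hx'
        rw [fderivWithin_of_isOpen isOpen_Ioo hx', (hwd x' hx').hasFDerivAt.fderiv]
        ext
        simp
    have h6 : q x - k * Real.log x = q xm - k * Real.log xm := hconst
    linarith
  · -- Conclusion 3
    have hPD : ∀ (y : Fin n → ℝ) (i : Fin n), pd i τ y = -(c i / k) * τ y := by
      intro y i
      obtain ⟨x, hxI, hTx⟩ := hpick y
      have hstar := (main x hxI y i).2 hTx
      rw [hk x hxI] at hstar
      field_simp
      linear_combination hstar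
    intro y i
    have h2 : pd i (pd i τ) y = (c i / k) ^ 2 * τ y := by
      have heq : (fun t => pd i τ (Function.update y i t))
          = fun t => -(c i / k) * τ (Function.update y i t) := by
        funext t; exact hPD (Function.update y i t) i
      rw [pd, heq, deriv_const_mul_field]
      have h3 : deriv (fun t => τ (Function.update y i t)) (y i) = pd i τ y := rfl
      rw [h3, hPD y i]
      ring
    rw [h2, hPD y i]
    ring
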